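/- arXiv:math/0111299 — 4 statements merged into one kernel-verified Lean document; each statement's English description precedes it below -/
import Mathlib

section
/- Let (V, R, par, m, ≻) be a one-rooted weighted proximity tree with m_R ≥ 2, and assume it is minimal, i.e., no leaf of the tree (vertex with no children) is a free vertex of weight 1. Set deg(D) := Σ_V binom(m_V + 1, 2), dim(D) := 1 + (number of free vertices), cod(D) := deg(D) − dim(D), and δ(D) := Σ_V binom(m_V, 2). Then δ(D) ≤ cod(D), and equality holds if and only if V = {R} and m_R = 2. (In fact cod(D) − δ(D) = (m_R − 2) + Σ_{V ∈ F}(m_V − 1) + Σ_{V ∈ S} m_V.) -/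
/-- A one-rooted weighted proximity tree: a finite rooted tree `(V, R, par)`
with weights `m v ≥ 1` and a proximity relation `prox w v` ("`w` is proximate
to `v`") such that every non-root vertex is proximate to its parent, the root
is proximate to no vertex, and each non-root vertex is proximate, besides its
parent, to at most one further vertex, which must be a strict ancestor of its
parent. -/
structure ProxTree where
  V : Type
  fin : Fintype V
  R : V
  par : V → V
  par_root : par R = R
  reaches_root : ∀ v, ∃ n, par^[n] v = R
  m : V → ℕ
  m_pos : ∀ v, 1 ≤ m v
  prox : V → V → Prop
  prox_par : ∀ w, w ≠ R → prox w (par w)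
  root_not_prox : ∀ v, ¬ prox R v
  prox_unique : ∀ w, w ≠ R → ∀ u u', prox w u → u ≠ par w → prox w u' → u' ≠ par w → u = u'
  prox_anc : ∀ w, w ≠ R → ∀ u, prox w u → u ≠ par w →
    (∃ n, 1 ≤ n ∧ par^[n] (par w) = u) ∧ u ≠ w

namespace ProxTree

variable (T : ProxTree)

instance : Fintype T.V := T.fin

/-- A vertex is a satellite if it is proximate to a vertex other than its parent. -/
def Satellite (w : T.V) : Prop := w ≠ T.R ∧ ∃ v, T.prox w v ∧ v ≠ T.par w

/-- A vertex is free if it is not a satellite. -/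
def Free (v : T.V) : Prop := ¬ T.Satellite v

/-- The set `S` of satellites. -/
noncomputable def satS : Finset T.V :=
  letI := Classical.decPred T.Satellite
  Finset.univ.filter T.Satellite

/-- The set `F` of free vertices other than the root. -/
noncomputable def freeF : Finset T.V :=
  letI := Classical.dec
  Finset.univ.filter (fun v => T.Free v ∧ v ≠ T.R)

/-- The set of all free vertices. -/
noncomputable def freeAll : Finset T.V :=
  letI := Classical.decPred T.Free
  Finset.univ.filter T.Free

/-- The set of vertices proximate to `v`. -/
noncomputable def proxTo (v : T.V) : Finset T.V :=
  letI := Classical.dec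
  Finset.univ.filter (fun w => T.prox w v)

/-- `r(D) := Σ_V (m_V − Σ_{W ≻ V} m_W)`, the number of branches. -/
noncomputable def rD : ℤ :=
  ∑ v : T.V, ((T.m v : ℤ) - ∑ w ∈ T.proxTo v, (T.m w : ℤ))

/-- `deg(D) := Σ_V binom(m_V + 1, 2)`. -/
noncomputable def degD : ℤ := ∑ v : T.V, ((T.m v + 1).choose 2 : ℤ)

/-- `dim(D) := 1 + (number of free vertices)`. -/
noncomputable def dimD : ℤ := 1 + (T.freeAll.card : ℤ)

/-- `cod(D) := deg(D) − dim(D)`. -/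
noncomputable def codD : ℤ := T.degD - T.dimD

/-- `δ(D) := Σ_V binom(m_V, 2)`. -/
noncomputable def deltaD : ℤ := ∑ v : T.V, ((T.m v).choose 2 : ℤ)

/-- `μ(D) := 2δ(D) − r(D) + 1`, the Milnor number. -/
noncomputable def muD : ℤ := 2 * T.deltaD - T.rD + 1

/-- `e(D) := μ(D) + m_R − 1`. -/
noncomputable def eD : ℤ := T.muD + (T.m T.R : ℤ) - 1

/-- A leaf is a vertex with no children. -/
def Leaf (v : T.V) : Prop := ¬ ∃ w, w ≠ v ∧ T.par w = v

/-- A proximity tree is minimal if no leaf is a free vertex of weight 1. -/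
def Minimal : Prop := ∀ v, T.Leaf v → T.Free v → T.m v ≠ 1

end ProxTree

/-- For a minimal one-rooted weighted proximity tree with `m_R ≥ 2`,
`cod(D) − δ(D) = (m_R − 2) + Σ_{V ∈ F}(m_V − 1) + Σ_{V ∈ S} m_V`; in
particular `δ(D) ≤ cod(D)`, with equality iff the tree consists of the single
vertex `R` with `m_R = 2`. -/
theorem delta_le_cod (T : ProxTree) (hR : 2 ≤ T.m T.R) (hmin : T.Minimal) :
    T.codD - T.deltaD =
        ((T.m T.R : ℤ) - 2) + ∑ v ∈ T.freeF, ((T.m v : ℤ) - 1) +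
          ∑ v ∈ T.satS, (T.m v : ℤ) ∧
      T.deltaD ≤ T.codD ∧
      (T.deltaD = T.codD ↔ (∀ v : T.V, v = T.R) ∧ T.m T.R = 2) := by
  classical
  -- deg - δ = Σ m
  have hdeg : T.degD - T.deltaD = ∑ v : T.V, (T.m v : ℤ) := by
    unfold ProxTree.degD ProxTree.deltaD
    rw [← Finset.sum_sub_distrib]
    refine Finset.sum_congr rfl fun v _ => ?_
    have h : (T.m v + 1).choose 2 = T.m v + (T.m v).choose 2 := by
      rw [Nat.choose_succ_succ, Nat.choose_one_right]
    rw [h]; push_cast; ring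
  have hRfree : T.Free T.R := fun hs => hs.1 rfl
  have hfreeAll : T.freeAll = insert T.R T.freeF := by
    ext v
    unfold ProxTree.freeAll ProxTree.freeF
    simp only [Finset.mem_filter, Finset.mem_univ, true_and, Finset.mem_insert]
    constructor
    · intro h
      by_cases hv : v = T.R
      · exact Or.inl hv
      · exact Or.inr ⟨h, hv⟩
    · rintro (rfl | ⟨h, _⟩)
      · exact hRfree
      · exact h
  have hRnotF : T.R ∉ T.freeF := by
    unfold ProxTree.freeF
    simp
  have hcard : (T.freeAll.card : ℤ) = T.freeF.card + 1 := by
    rw [hfreeAll, Finset.card_insert_of_notMem hRnotF]; push_cast; ring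
  have hsplit : ∑ v : T.V, (T.m v : ℤ)
      = (∑ v ∈ T.satS, (T.m v : ℤ)) + (T.m T.R : ℤ) + ∑ v ∈ T.freeF, (T.m v : ℤ) := by
    have h1 := Finset.sum_filter_add_sum_filter_not Finset.univ T.Satellite
      (fun v => (T.m v : ℤ))
    have h2 : T.satS = Finset.univ.filter T.Satellite := by
      ext v; unfold ProxTree.satS; simp [Finset.mem_filter]
    have h3 : T.freeAll = Finset.univ.filter (fun v => ¬ T.Satellite v) := by
      ext v; unfold ProxTree.freeAll ProxTree.Free; simp [Finset.mem_filter]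
    have h4 : ∑ v ∈ T.freeAll, (T.m v : ℤ) = (T.m T.R : ℤ) + ∑ v ∈ T.freeF, (T.m v : ℤ) := by
      rw [hfreeAll, Finset.sum_insert hRnotF]
    rw [← h2, ← h3, h4] at h1
    linarith
  have hsub : ∑ v ∈ T.freeF, ((T.m v : ℤ) - 1)
      = (∑ v ∈ T.freeF, (T.m v : ℤ)) - T.freeF.card := by
    rw [Finset.sum_sub_distrib, Finset.sum_const]; simp
  have hmain : T.codD - T.deltaD =
      ((T.m T.R : ℤ) - 2) + ∑ v ∈ T.freeF, ((T.m v : ℤ) - 1) +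
        ∑ v ∈ T.satS, (T.m v : ℤ) := by
    unfold ProxTree.codD ProxTree.dimD
    rw [hsub]
    linarith
  have h1 : (0:ℤ) ≤ (T.m T.R : ℤ) - 2 := by
    have := hR; omega
  have h2 : (0:ℤ) ≤ ∑ v ∈ T.freeF, ((T.m v : ℤ) - 1) := by
    apply Finset.sum_nonneg
    intro v _
    have := T.m_pos v; omega
  have h3 : (0:ℤ) ≤ ∑ v ∈ T.satS, (T.m v : ℤ) := by
    apply Finset.sum_nonneg
    intro v _
    positivity
  -- Key: if satS empty and all freeF have weight 1, the tree is just the root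
  have hleafkey : T.satS = ∅ → (∀ v ∈ T.freeF, T.m v = 1) → ∀ v, v = T.R := by
    intro hS hF v
    by_contra hv
    set d : T.V → ℕ := fun u => Nat.find (T.reaches_root u) with hd
    have hdspec : ∀ u, T.par^[d u] u = T.R := fun u => Nat.find_spec (T.reaches_root u)
    have hdzero : ∀ u, d u = 0 → u = T.R := by
      intro u h0
      have := hdspec u
      rwa [h0, Function.iterate_zero_apply] at this
    obtain ⟨v0, -, hmax⟩ := Finset.exists_max_image Finset.univ d ⟨v, Finset.mem_univ v⟩
    have hdv : 1 ≤ d v := by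
      rcases Nat.eq_zero_or_pos (d v) with h | h
      · exact absurd (hdzero v h) hv
      · exact h
    have hv0R : v0 ≠ T.R := by
      intro h
      have h1' := hmax v (Finset.mem_univ v)
      have hdR : d T.R = 0 := by
        have : T.par^[0] T.R = T.R := rfl
        exact Nat.le_zero.mp (Nat.find_le this)
      rw [h, hdR] at h1'; omega
    have hleaf : T.Leaf v0 := by
      intro hex
      obtain ⟨w, hwne, hwpar⟩ := hex
      have hwR : w ≠ T.R := by
        intro h; rw [h, T.par_root] at hwpar; exact hv0R hwpar.symm
      have hdw : 1 ≤ d w := by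
        rcases Nat.eq_zero_or_pos (d w) with h | h
        · exact absurd (hdzero w h) hwR
        · exact h
      have hiter : T.par^[d w - 1] v0 = T.R := by
        have h1' := hdspec w
        rw [show d w = (d w - 1) + 1 by omega, Function.iterate_succ_apply, hwpar] at h1'
        exact h1'
      have hle : d v0 ≤ d w - 1 := Nat.find_le hiter
      have hge := hmax w (Finset.mem_univ w)
      omega
    have hv0free : T.Free v0 := by
      intro hsat
      have hmem : v0 ∈ T.satS := by
        unfold ProxTree.satS; simp [Finset.mem_filter, hsat]
      rw [hS] at hmem; simp at hmem
    have hv0F : v0 ∈ T.freeF := by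
      unfold ProxTree.freeF; simp [Finset.mem_filter, hv0free, hv0R]
    exact hmin v0 hleaf hv0free (hF v0 hv0F)
  refine ⟨hmain, by linarith, ?_⟩
  constructor
  · intro heq
    have hzero : ((T.m T.R : ℤ) - 2) + ∑ v ∈ T.freeF, ((T.m v : ℤ) - 1) +
        ∑ v ∈ T.satS, (T.m v : ℤ) = 0 := by linarith
    have e1 : (T.m T.R : ℤ) - 2 = 0 := by linarith
    have e2 : ∑ v ∈ T.freeF, ((T.m v : ℤ) - 1) = 0 := by linarith
    have e3 : ∑ v ∈ T.satS, (T.m v : ℤ) = 0 := by linarith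
    have hFone : ∀ v ∈ T.freeF, T.m v = 1 := by
      intro v hvF
      have := (Finset.sum_eq_zero_iff_of_nonneg
        (fun v _ => by have := T.m_pos v; omega : ∀ v ∈ T.freeF, (0:ℤ) ≤ (T.m v : ℤ) - 1)).mp
        e2 v hvF
      omega
    have hSempty : T.satS = ∅ := by
      rw [Finset.eq_empty_iff_forall_notMem]
      intro v hvS
      have hle : (T.m v : ℤ) ≤ ∑ u ∈ T.satS, (T.m u : ℤ) :=
        Finset.single_le_sum (f := fun u => (T.m u : ℤ)) (fun u _ => by positivity) hvS
      have := T.m_pos v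
      omega
    exact ⟨hleafkey hSempty hFone, by omega⟩
  · rintro ⟨hall, hm2⟩
    have hFempty : T.freeF = ∅ := by
      rw [Finset.eq_empty_iff_forall_notMem]
      intro v hvF
      have : v ≠ T.R := by
        unfold ProxTree.freeF at hvF
        simp only [Finset.mem_filter] at hvF
        exact hvF.2.2
      exact this (hall v)
    have hSempty : T.satS = ∅ := by
      rw [Finset.eq_empty_iff_forall_notMem]
      intro v hvS
      have hsat : T.Satellite v := by
        revert hvS; unfold ProxTree.satS; simp [Finset.mem_filter]
      exact hsat.1 (hall v)
    rw [hFempty, hSempty] at hmain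
    simp at hmain
    omega
end

section
/- Let (V, R, par, m, ≻) be a one-rooted weighted proximity tree with m_R ≥ 2. Set deg(D) := Σ_V binom(m_V + 1, 2), dim(D) := 1 + (number of free vertices), cod(D) := deg(D) − dim(D), δ(D) := Σ_V binom(m_V, 2), r(D) := Σ_V (m_V − Σ_{W ≻ V} m_W), and μ(D) := 2δ(D) − r(D) + 1. Then μ(D) − cod(D) = binom(m_R − 2, 2) + Σ_{V ∈ F} binom(m_V − 1, 2) + Σ_{V ∈ S} binom(m_V, 2); in particular cod(D) ≤ μ(D). -/
open Finset

private lemma choose_two_succ (n : ℕ) : (n+1).choose 2 = n.choose 2 + n := by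
  rw [Nat.choose_succ_succ, Nat.choose_one_right, Nat.add_comm]

private lemma choose_sub_two (m : ℕ) (h : 2 ≤ m) :
    ((m-2).choose 2 : ℤ) = (m.choose 2 : ℤ) - 2*m + 3 := by
  obtain ⟨k, rfl⟩ : ∃ k, m = k + 2 := ⟨m - 2, by omega⟩
  have : (k+2).choose 2 = k.choose 2 + 2*k + 1 := by
    rw [choose_two_succ, choose_two_succ]; ring
  simp only [Nat.add_sub_cancel, this]
  push_cast; ring

private lemma choose_sub_one (m : ℕ) (h : 1 ≤ m) :
    ((m-1).choose 2 : ℤ) = (m.choose 2 : ℤ) - m + 1 := by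
  obtain ⟨k, rfl⟩ : ∃ k, m = k + 1 := ⟨m - 1, by omega⟩
  rw [Nat.add_sub_cancel, choose_two_succ]
  push_cast; ring

/-- For a one-rooted weighted proximity tree with `m_R ≥ 2`,
`μ(D) − cod(D) = binom(m_R − 2, 2) + Σ_{V ∈ F} binom(m_V − 1, 2)
+ Σ_{V ∈ S} binom(m_V, 2)`; in particular `cod(D) ≤ μ(D)`. -/
theorem mu_sub_cod (T : ProxTree) (hR : 2 ≤ T.m T.R) :
    T.muD - T.codD =
        ((T.m T.R - 2).choose 2 : ℤ) + ∑ v ∈ T.freeF, (((T.m v - 1).choose 2 : ℕ) : ℤ) +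
          ∑ v ∈ T.satS, (((T.m v).choose 2 : ℕ) : ℤ) ∧
      T.codD ≤ T.muD := by
  classical
  -- number of vertices a vertex is proximate to
  set c : T.V → ℕ := fun w => (univ.filter (fun v => T.prox w v)).card with hc
  have hcR : c T.R = 0 := by
    simp only [hc, Finset.card_eq_zero, Finset.filter_eq_empty_iff]
    intro v _; exact T.root_not_prox v
  have hcF : ∀ w ∈ T.freeF, c w = 1 := by
    intro w hw
    simp only [ProxTree.freeF, Finset.mem_filter, Finset.mem_univ, true_and] at hw
    obtain ⟨hfree, hne⟩ := hw
    have h1 : (univ.filter (fun v => T.prox w v)) = {T.par w} := by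
      ext v
      simp only [Finset.mem_filter, Finset.mem_univ, true_and, Finset.mem_singleton]
      constructor
      · intro hv
        by_contra hvne
        exact hfree ⟨hne, v, hv, hvne⟩
      · rintro rfl; exact T.prox_par w hne
    simp [hc, h1]
  have hcS : ∀ w ∈ T.satS, c w = 2 := by
    intro w hw
    simp only [ProxTree.satS, Finset.mem_filter, Finset.mem_univ, true_and] at hw
    obtain ⟨hne, u, hu, hune⟩ := hw
    have hset : (univ.filter (fun v => T.prox w v)) = {T.par w, u} := by
      ext v
      simp only [Finset.mem_filter, Finset.mem_univ, true_and, Finset.mem_insert,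
        Finset.mem_singleton]
      constructor
      · intro hv
        by_cases hvp : v = T.par w
        · exact Or.inl hvp
        · exact Or.inr (T.prox_unique w hne u v hu hune hv hvp).symm
      · rintro (rfl | rfl)
        · exact T.prox_par w hne
        · exact hu
    simp only [hc, hset]
    rw [Finset.card_insert_of_notMem (by simp [Ne.symm hune]), Finset.card_singleton]
  -- swapping the double sum in rD
  have hswap : (∑ v : T.V, ∑ w ∈ T.proxTo v, (T.m w : ℤ))
      = ∑ w : T.V, (c w : ℤ) * T.m w := by
    simp only [ProxTree.proxTo, Finset.sum_filter]
    rw [Finset.sum_comm]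
    refine Finset.sum_congr rfl fun w _ => ?_
    rw [← Finset.sum_filter, Finset.sum_const, nsmul_eq_mul]
  -- partition of the vertex set
  have hRfree : T.Free T.R := fun hs => hs.1 rfl
  have hRnotmem : T.R ∉ T.freeF := by
    simp [ProxTree.freeF]
  have hfreeAll : T.freeAll = insert T.R T.freeF := by
    ext v
    simp only [ProxTree.freeAll, ProxTree.freeF, Finset.mem_filter, Finset.mem_univ,
      true_and, Finset.mem_insert]
    constructor
    · intro hv
      by_cases hvR : v = T.R
      · exact Or.inl hvR
      · exact Or.inr ⟨hv, hvR⟩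
    · rintro (rfl | ⟨hv, _⟩)
      · exact hRfree
      · exact hv
  have hcardAll : (T.freeAll.card : ℤ) = T.freeF.card + 1 := by
    rw [hfreeAll, Finset.card_insert_of_notMem hRnotmem]; push_cast; ring
  have hpart : ∀ g : T.V → ℤ,
      ∑ w : T.V, g w = g T.R + ∑ w ∈ T.freeF, g w + ∑ w ∈ T.satS, g w := by
    intro g
    have h1 : ∑ w : T.V, g w
        = ∑ w ∈ univ.filter T.Satellite, g w
          + ∑ w ∈ univ.filter (fun v => ¬ T.Satellite v), g w :=
      (Finset.sum_filter_add_sum_filter_not _ _ _).symm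
    have h2 : univ.filter (fun v => ¬ T.Satellite v) = T.freeAll := by
      simp only [ProxTree.freeAll]
      exact Finset.filter_congr (fun v _ => Iff.rfl)
    have h3 : univ.filter T.Satellite = T.satS := by
      simp [ProxTree.satS]
    rw [h1, h2, h3, hfreeAll, Finset.sum_insert hRnotmem]
    ring
  -- the main computation
  have key : T.muD - T.codD
      = (∑ w : T.V, (((T.m w).choose 2 : ℤ) - 2 * T.m w + (c w : ℤ) * T.m w))
        + 3 + T.freeF.card := by
    simp only [ProxTree.muD, ProxTree.codD, ProxTree.degD, ProxTree.dimD, ProxTree.deltaD,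
      ProxTree.rD]
    rw [Finset.sum_sub_distrib, hswap, hcardAll]
    have hdeg : (∑ v : T.V, ((T.m v + 1).choose 2 : ℤ))
        = ∑ v : T.V, (((T.m v).choose 2 : ℤ) + T.m v) := by
      refine Finset.sum_congr rfl fun w _ => ?_
      rw [choose_two_succ]; push_cast; ring
    rw [hdeg]
    simp only [Finset.sum_add_distrib, Finset.sum_sub_distrib, ← Finset.mul_sum]
    ring
  have hS : ∑ w ∈ T.satS, (((T.m w).choose 2 : ℤ) - 2 * T.m w + (c w : ℤ) * T.m w)
      = ∑ w ∈ T.satS, (((T.m w).choose 2 : ℕ) : ℤ) := by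
    refine Finset.sum_congr rfl fun w hw => ?_
    rw [hcS w hw]; push_cast; ring
  have hF : ∑ w ∈ T.freeF, (((T.m w).choose 2 : ℤ) - 2 * T.m w + (c w : ℤ) * T.m w)
      = ∑ w ∈ T.freeF, ((((T.m w - 1).choose 2 : ℕ) : ℤ) - 1) := by
    refine Finset.sum_congr rfl fun w hw => ?_
    rw [hcF w hw, choose_sub_one _ (T.m_pos w)]; push_cast; ring
  have main : T.muD - T.codD =
      ((T.m T.R - 2).choose 2 : ℤ) + ∑ v ∈ T.freeF, (((T.m v - 1).choose 2 : ℕ) : ℤ) +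
        ∑ v ∈ T.satS, (((T.m v).choose 2 : ℕ) : ℤ) := by
    rw [key, hpart, hS, hF, Finset.sum_sub_distrib, Finset.sum_const, hcR,
      choose_sub_two _ hR]
    push_cast
    ring
  refine ⟨main, ?_⟩
  have h0 : (0:ℤ) ≤ ((T.m T.R - 2).choose 2 : ℤ)
      + ∑ v ∈ T.freeF, (((T.m v - 1).choose 2 : ℕ) : ℤ)
      + ∑ v ∈ T.satS, (((T.m v).choose 2 : ℕ) : ℤ) := by
    have := Finset.sum_nonneg (s := T.freeF)
      (f := fun v => (((T.m v - 1).choose 2 : ℕ) : ℤ)) (fun v _ => Int.natCast_nonneg _)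
    have := Finset.sum_nonneg (s := T.satS)
      (f := fun v => (((T.m v).choose 2 : ℕ) : ℤ)) (fun v _ => Int.natCast_nonneg _)
    positivity
  linarith [main, h0]
end

section
/- Let (V, R, par, m, ≻) be a one-rooted weighted proximity tree with m_R ≥ 2 and r(D) ≥ 1, and assume it is minimal, i.e., no leaf of the tree (vertex with no children) is a free vertex of weight 1. Set deg(D) := Σ_V binom(m_V + 1, 2), dim(D) := 1 + (number of free vertices), cod(D) := deg(D) − dim(D), δ(D) := Σ_V binom(m_V, 2), r(D) := Σ_V (m_V − Σ_{W ≻ V} m_W), μ(D) := 2δ(D) − r(D) + 1, and e(D) := μ(D) + m_R − 1. Then e(D) ≤ 2·cod(D), and equality holds if and only if V = {R} and m_R = 2. -/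
namespace ProxTree

variable (T : ProxTree)

lemma root_not_sat : ¬ T.Satellite T.R := fun h => h.1 rfl

open Finset in
lemma sum_sum_proxTo :
    ∑ v : T.V, ∑ w ∈ T.proxTo v, (T.m w : ℤ)
      = (∑ w : T.V, (T.m w : ℤ) - (T.m T.R : ℤ)) + ∑ w ∈ T.satS, (T.m w : ℤ) := by
  classical
  have h1 : ∀ v : T.V, ∑ w ∈ T.proxTo v, (T.m w : ℤ)
      = ∑ w : T.V, (if T.prox w v then (T.m w : ℤ) else 0) := by
    intro v
    rw [ProxTree.proxTo]
    simp [Finset.sum_filter]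
  calc ∑ v : T.V, ∑ w ∈ T.proxTo v, (T.m w : ℤ)
      = ∑ v : T.V, ∑ w : T.V, (if T.prox w v then (T.m w : ℤ) else 0) := by
        exact Finset.sum_congr rfl fun v _ => h1 v
    _ = ∑ w : T.V, ∑ v : T.V, (if T.prox w v then (T.m w : ℤ) else 0) :=
        Finset.sum_comm
    _ = ∑ w : T.V, ((if w = T.R then 0 else (T.m w : ℤ))
          + (if T.Satellite w then (T.m w : ℤ) else 0)) := by
        refine Finset.sum_congr rfl fun w _ => ?_
        rw [← Finset.sum_filter]
        by_cases hw : w = T.R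
        · subst hw
          have : (Finset.univ.filter fun v => T.prox T.R v) = ∅ := by
            ext v; simp [T.root_not_prox v]
          simp [this, T.root_not_sat]
        · by_cases hs : T.Satellite w
          · obtain ⟨-, u, hu, hupar⟩ := hs
            have hfil : (Finset.univ.filter fun v => T.prox w v) = {T.par w, u} := by
              ext v
              simp only [Finset.mem_filter, Finset.mem_univ, true_and,
                Finset.mem_insert, Finset.mem_singleton]
              constructor
              · intro hv
                by_cases hvp : v = T.par w
                · exact Or.inl hvp
                · exact Or.inr (T.prox_unique w hw v u hv hvp hu hupar)
              · rintro (rfl | rfl)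
                · exact T.prox_par w hw
                · exact hu
            have hne : T.par w ≠ u := fun h => hupar h.symm
            rw [hfil, Finset.sum_pair hne]
            simp only [if_neg hw, if_pos (show T.Satellite w from ⟨hw, u, hu, hupar⟩)]
          · have hfil : (Finset.univ.filter fun v => T.prox w v) = {T.par w} := by
              ext v
              simp only [Finset.mem_filter, Finset.mem_univ, true_and,
                Finset.mem_singleton]
              constructor
              · intro hv
                by_contra hvp
                exact hs ⟨hw, v, hv, hvp⟩
              · rintro rfl; exact T.prox_par w hw
            rw [hfil, Finset.sum_singleton]
            simp [hw, hs]
    _ = (∑ w : T.V, (T.m w : ℤ) - (T.m T.R : ℤ)) + ∑ w ∈ T.satS, (T.m w : ℤ) := by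
        rw [Finset.sum_add_distrib]
        congr 1
        · have : ∑ w : T.V, (if w = T.R then 0 else (T.m w : ℤ))
              = ∑ w : T.V, ((T.m w : ℤ) - (if w = T.R then (T.m w : ℤ) else 0)) := by
            refine Finset.sum_congr rfl fun w _ => ?_
            by_cases hw : w = T.R <;> simp [hw]
          rw [this, Finset.sum_sub_distrib, Finset.sum_ite_eq' Finset.univ T.R]
          simp
        · rw [ProxTree.satS]
          simp [Finset.sum_filter]

lemma rD_eq : T.rD = (T.m T.R : ℤ) - ∑ w ∈ T.satS, (T.m w : ℤ) := by
  classical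
  rw [ProxTree.rD, Finset.sum_sub_distrib, T.sum_sum_proxTo]
  ring

lemma degD_eq : T.degD = T.deltaD + ∑ v : T.V, (T.m v : ℤ) := by
  classical
  rw [ProxTree.degD, ProxTree.deltaD, ← Finset.sum_add_distrib]
  refine Finset.sum_congr rfl fun v _ => ?_
  have : (T.m v + 1).choose 2 = (T.m v).choose 2 + T.m v := by
    rw [Nat.choose_succ_succ]
    simp [Nat.choose_one_right, Nat.add_comm]
  rw [this]; push_cast; ring

lemma freeAll_card : (T.freeAll.card : ℤ) = (Fintype.card T.V : ℤ) - T.satS.card := by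
  classical
  have := Finset.card_filter_add_card_filter_not
    (s := (Finset.univ : Finset T.V)) (p := T.Satellite)
  rw [Finset.card_univ] at this
  have h2 : T.freeAll.card = (Finset.univ.filter fun v => ¬ T.Satellite v).card := by
    congr 1
    rw [ProxTree.freeAll]
    ext v
    simp [ProxTree.Free]
  have h3 : T.satS.card = (Finset.univ.filter T.Satellite).card := by
    rw [ProxTree.satS]
  omega

lemma exists_leaf_ne_root (w : T.V) (hw : w ≠ T.R) :
    ∃ v, v ≠ T.R ∧ T.Leaf v := by
  classical
  let d : T.V → ℕ := fun v => Nat.find (T.reaches_root v)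
  obtain ⟨v, -, hv⟩ := Finset.exists_max_image Finset.univ d ⟨w, Finset.mem_univ w⟩
  have hdspec : ∀ u, T.par^[d u] u = T.R := fun u => Nat.find_spec (T.reaches_root u)
  have hd_pos : ∀ u, u ≠ T.R → 1 ≤ d u := by
    intro u hu
    rcases Nat.eq_zero_or_pos (d u) with h | h
    · exact absurd (by simpa [h] using hdspec u) hu
    · exact h
  have hvR : v ≠ T.R := by
    intro hvr
    have hd0 : d v = 0 := Nat.le_zero.mp (Nat.find_min' _ (by simp [hvr]))
    have := hv w (Finset.mem_univ w)
    have := hd_pos w hw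
    omega
  refine ⟨v, hvR, ?_⟩
  rintro ⟨u, hune, hpar⟩
  have huR : u ≠ T.R := by
    rintro rfl
    exact hvR (by rw [← hpar, T.par_root])
  obtain ⟨k, hk⟩ : ∃ k, d u = k + 1 := ⟨d u - 1, by have := hd_pos u huR; omega⟩
  have : T.par^[k] v = T.R := by
    have := hdspec u
    rwa [hk, Function.iterate_succ_apply, hpar] at this
  have hdv : d v ≤ k := Nat.find_min' _ this
  have := hv u (Finset.mem_univ u)
  omega

end ProxTree

/-- For a minimal one-rooted weighted proximity tree with `m_R ≥ 2` and
`r(D) ≥ 1`, one has `e(D) ≤ 2·cod(D)`, with equality iff the tree consists of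
the single vertex `R` with `m_R = 2`. -/
theorem e_le_two_cod (T : ProxTree) (hR : 2 ≤ T.m T.R) (hr : 1 ≤ T.rD)
    (hmin : T.Minimal) :
    T.eD ≤ 2 * T.codD ∧
      (T.eD = 2 * T.codD ↔ (∀ v : T.V, v = T.R) ∧ T.m T.R = 2) := by
  classical
  -- abbreviations
  set S := T.satS with hS
  have hB0 : (0:ℤ) ≤ ∑ w ∈ S, ((T.m w : ℤ) - 1) :=
    Finset.sum_nonneg fun w _ => by have := T.m_pos w; push_cast; omega
  have hAeR : ∑ v ∈ Finset.univ.erase T.R, ((T.m v : ℤ) - 1) + ((T.m T.R : ℤ) - 1)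
      = ∑ v : T.V, ((T.m v : ℤ) - 1) :=
    Finset.sum_erase_add _ _ (Finset.mem_univ T.R)
  have hRS : T.R ∉ S := by
    rw [hS, ProxTree.satS]
    simp [T.root_not_sat]
  have hBA : ∑ w ∈ S, ((T.m w : ℤ) - 1)
      ≤ ∑ v ∈ Finset.univ.erase T.R, ((T.m v : ℤ) - 1) := by
    refine Finset.sum_le_sum_of_subset_of_nonneg ?_ ?_
    · intro x hx
      exact Finset.mem_erase.mpr ⟨fun h => hRS (h ▸ hx), Finset.mem_univ x⟩
    · intro i _ _
      have := T.m_pos i; push_cast; omega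
  have hA1 : ∑ v ∈ Finset.univ.erase T.R, ((T.m v : ℤ) - 1) ≥ 0 :=
    Finset.sum_nonneg fun w _ => by have := T.m_pos w; push_cast; omega
  -- the key identity
  have hcount : (Fintype.card T.V : ℤ) = (Finset.univ : Finset T.V).card := by
    rw [Finset.card_univ]
  have hsum_split : ∑ v : T.V, (T.m v : ℤ) = ∑ v : T.V, ((T.m v : ℤ) - 1) + Fintype.card T.V := by
    rw [Finset.sum_sub_distrib]
    simp [Finset.card_univ]
  have hSsum : ∑ w ∈ S, (T.m w : ℤ) = ∑ w ∈ S, ((T.m w : ℤ) - 1) + S.card := by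
    rw [Finset.sum_sub_distrib]
    simp
  have hkey : T.eD - 2 * T.codD
      = ∑ w ∈ S, ((T.m w : ℤ) - 1) - 2 * ∑ v : T.V, ((T.m v : ℤ) - 1) - S.card + 2 := by
    rw [ProxTree.eD, ProxTree.muD, ProxTree.codD, ProxTree.dimD, T.rD_eq, T.degD_eq,
      T.freeAll_card, ← hS, hsum_split, hSsum]
    ring
  have hmr : (2:ℤ) ≤ (T.m T.R : ℤ) := by exact_mod_cast hR
  have hsc : (0:ℤ) ≤ (S.card : ℤ) := Int.natCast_nonneg _
  constructor
  · -- inequality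
    nlinarith [hkey, hBA, hAeR, hA1, hB0, hmr, hsc]
  constructor
  · -- forward: equality implies singleton
    intro heq
    rw [heq] at hkey
    -- derive A = 1, s = 0
    have hA_eq : ∑ v : T.V, ((T.m v : ℤ) - 1) = 1 ∧ (S.card : ℤ) = 0 := by
      constructor <;> nlinarith [hkey, hBA, hAeR, hA1, hB0, hmr, hsc]
    obtain ⟨hA, hs0⟩ := hA_eq
    have hmR2 : T.m T.R = 2 := by
      have h1 : ((T.m T.R : ℤ)) = 2 := by linarith
      exact_mod_cast h1
    refine ⟨?_, hmR2⟩
    by_contra hcon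
    push_neg at hcon
    obtain ⟨w, hw⟩ := hcon
    obtain ⟨v, hvR, hleaf⟩ := T.exists_leaf_ne_root w hw
    have hSempty : S = ∅ := Finset.card_eq_zero.mp (by exact_mod_cast hs0)
    have hfree : T.Free v := by
      intro hsat
      have : v ∈ S := by
        rw [hS, ProxTree.satS]
        simp [hsat]
      simp [hSempty] at this
    have herase0 : ∑ u ∈ Finset.univ.erase T.R, ((T.m u : ℤ) - 1) = 0 := by linarith
    have hv1 : (T.m v : ℤ) - 1 = 0 := by
      have := (Finset.sum_eq_zero_iff_of_nonneg
        (fun i _ => by have := T.m_pos i; push_cast; omega)).mp herase0 v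
        (Finset.mem_erase.mpr ⟨hvR, Finset.mem_univ v⟩)
      exact this
    exact hmin v hleaf hfree (by omega)
  · -- backward
    rintro ⟨hall, hm2⟩
    have huniv : (Finset.univ : Finset T.V) = {T.R} := by
      ext v; simp [hall v]
    have hA : ∑ v : T.V, ((T.m v : ℤ) - 1) = 1 := by
      rw [huniv, Finset.sum_singleton, hm2]
      norm_num
    have hSempty : S = ∅ := by
      rw [Finset.eq_empty_iff_forall_notMem]
      intro x hx
      exact hRS ((hall x) ▸ hx)
    rw [hSempty] at hkey
    simp only [Finset.sum_empty, Finset.card_empty, Nat.cast_zero] at hkey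
    linarith
end

section
/- Let F be the formal power series over ℚ whose coefficient of q^n is (n+1)·σ₁(n+1), i.e., F = Σ_{k≥1} k·σ₁(k)·q^{k−1}. Then for every natural number g ≥ 1, the Bryan–Leung count N_{g,3} := g · (coefficient of q^3 in F^{g−1}) satisfies N_{g,3} = 4g(g−1)(9g² − 27g + 25). -/
/-!
Write `f = 1 + a₁ q + a₂ q² + a₃ q³ + ⋯`. Multiplying out `f ^ m` factor by factor, the
coefficient of `q³` is `m a₃ + m (m - 1) a₁ a₂ + (m choose 3) a₁³`. For `F` we have
`(a₁, a₂, a₃) = (6, 12, 28)` since `σ₁(2) = 3`, `σ₁(3) = 4`, `σ₁(4) = 7`, and with `m = g - 1`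
the expression `g · (28 m + 72 m (m - 1) + 216 (m choose 3))` is the stated polynomial.
-/

/-- The Bryan–Leung power series `F = Σ_{k≥1} k·σ₁(k)·q^{k−1}` over `ℚ`,
whose coefficient of `q^n` is `(n+1)·σ₁(n+1)`. -/
noncomputable def FBL : PowerSeries ℚ :=
  PowerSeries.mk fun n => (((n + 1) * ArithmeticFunction.sigma 1 (n + 1) : ℕ) : ℚ)

namespace PowerSeries

variable {R : Type*} [CommRing R] {f : R⟦X⟧}

theorem coeff_two_pow_of_constantCoeff_eq_one (hf : constantCoeff f = 1) (m : ℕ) :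
    coeff 2 (f ^ m) = m * coeff 2 f + m.choose 2 * coeff 1 f ^ 2 := by
  induction m with
  | zero => simp
  | succ m ih =>
    rw [pow_succ, coeff_mul, Finset.Nat.sum_antidiagonal_eq_sum_range_succ_mk]
    simp only [Finset.sum_range_succ, Finset.sum_range_zero, Nat.reduceSub, ih, coeff_one_pow, hf,
      coeff_zero_eq_constantCoeff_apply, map_pow, Nat.choose_succ_succ, Nat.choose_one_right]
    push_cast
    ring

theorem coeff_three_pow_of_constantCoeff_eq_one (hf : constantCoeff f = 1) (m : ℕ) :
    coeff 3 (f ^ m) = m * coeff 3 f + m * (m - 1) * coeff 1 f * coeff 2 f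
      + m.choose 3 * coeff 1 f ^ 3 := by
  induction m with
  | zero => simp
  | succ m ih =>
    rw [pow_succ, coeff_mul, Finset.Nat.sum_antidiagonal_eq_sum_range_succ_mk]
    simp only [Finset.sum_range_succ, Finset.sum_range_zero, Nat.reduceSub, ih, coeff_one_pow, hf,
      coeff_zero_eq_constantCoeff_apply, map_pow, Nat.choose_succ_succ,
      coeff_two_pow_of_constantCoeff_eq_one hf]
    push_cast
    ring

end PowerSeries

open PowerSeries

theorem Nat.cast_choose_three {K : Type*} [Field K] [CharZero K] (m : ℕ) :
    (m.choose 3 : K) = m * (m - 1) * (m - 2) / 6 := by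
  induction m with
  | zero => simp
  | succ m ih =>
    rw [Nat.choose_succ_succ, Nat.cast_add, ih, Nat.cast_choose_two]
    push_cast
    ring

theorem coeff_FBL (n : ℕ) :
    coeff n FBL = (n + 1) * ArithmeticFunction.sigma 1 (n + 1) := by
  simp [FBL]

theorem constantCoeff_FBL : constantCoeff FBL = 1 := by
  simp [← coeff_zero_eq_constantCoeff_apply, coeff_FBL]

theorem coeff_one_FBL : coeff 1 FBL = 6 := by
  norm_num [coeff_FBL, ArithmeticFunction.sigma_apply]

theorem coeff_two_FBL : coeff 2 FBL = 12 := by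
  norm_num [coeff_FBL, ArithmeticFunction.sigma_apply]

theorem coeff_three_FBL : coeff 3 FBL = 28 := by
  norm_num [coeff_FBL, ArithmeticFunction.sigma_apply, show Nat.divisors 4 = {1, 2, 4} by decide]

/-- The Bryan–Leung count `N_{g,3} := g · (coefficient of q^3 in F^{g−1})`
is given by the node polynomial of Table (5.1). -/
theorem N_g_3 (g : ℕ) (hg : 1 ≤ g) :
    (g : ℚ) * (PowerSeries.coeff (R := ℚ) 3) (FBL ^ (g - 1)) =
      4 * (g : ℚ) * ((g : ℚ) - 1) * (9 * (g : ℚ) ^ 2 - 27 * (g : ℚ) + 25) := by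
  obtain ⟨m, rfl⟩ := Nat.exists_eq_add_of_le' hg
  rw [Nat.add_sub_cancel, coeff_three_pow_of_constantCoeff_eq_one constantCoeff_FBL,
    coeff_one_FBL, coeff_two_FBL, coeff_three_FBL, Nat.cast_choose_three]
  push_cast
  ring
end
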